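/- arXiv:2002.02108 — 2 statements merged into one kernel-verified Lean document; each statement's English description precedes it below -/
import Mathlib

section
/- Let G be a groupoid, A a semigroup of Y-valued partial functions on G (with product defined pointwise on factorizations when a domain is a bisection), Z the set of elements of A with domain in G⁰ and range in the center of Y, and C the set of elements of A with domain contained in the isotropy G^iso. If the collection dom[Z] = {dom(z) : z ∈ Z} is T₀ on G⁰ (separates points of G⁰), then C equals the commutant of Z in A: C = {a ∈ A : az = za for all z ∈ Z}. -/
/-- A groupoid modelled as a set with a partially defined (Option-valued)
multiplication and an involution. -/
structure Gpd (G : Type*) where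
  mul : G → G → Option G
  inv : G → G
  inv_inv : ∀ g, inv (inv g) = g
  inv_mul_isSome : ∀ g, (mul (inv g) g).isSome
  defined_iff : ∀ g h, (mul g h).isSome ↔ mul (inv g) g = mul h (inv h)
  massoc : ∀ {g h k gh hk}, mul g h = some gh → mul h k = some hk →
      mul gh k = mul g hk
  inv_mul_cancel : ∀ {g h gh}, mul g h = some gh → mul (inv g) gh = some h
  mul_inv_cancel : ∀ {g h gh}, mul g h = some gh → mul gh (inv h) = some g
  mul_src : ∀ {g u}, mul (inv g) g = some u → mul g u = some g
  rng_mul : ∀ {g u}, mul g (inv g) = some u → mul u g = some g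

namespace Gpd

variable {G Y : Type*} (𝒢 : Gpd G)

/-- The source `s(g) = g⁻¹g`. -/
def src (g : G) : G := (𝒢.mul (𝒢.inv g) g).getD g

/-- The range `r(g) = gg⁻¹`. -/
def rng (g : G) : G := (𝒢.mul g (𝒢.inv g)).getD g

/-- The unit space `G⁰`. -/
def unitSpace : Set G := Set.range 𝒢.src

/-- The isotropy `G^iso`. -/
def iso : Set G := {g | 𝒢.src g = 𝒢.rng g}

/-- Bisections. -/
def IsBisection (B : Set G) : Prop :=
  ∀ g ∈ B, ∀ h ∈ B, (𝒢.src g = 𝒢.src h ∨ 𝒢.rng g = 𝒢.rng h) → g = h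

/-- Isosections. -/
def IsIsosection (I : Set G) : Prop :=
  ∀ g ∈ I, ∀ h ∈ I, (𝒢.src g = 𝒢.src h ↔ 𝒢.rng g = 𝒢.rng h)

/-- Product of subsets. -/
def setMul (A B : Set G) : Set G := {x | ∃ g ∈ A, ∃ h ∈ B, 𝒢.mul g h = some x}

/-- Inverse of a subset. -/
def setInv (A : Set G) : Set G := 𝒢.inv '' A

end Gpd

/-- The domain of a `Y`-valued partial function on `G`. -/
def pdom {G Y : Type*} (a : G → Option Y) : Set G := {g | (a g).isSome}

open Classical in
/-- The product of partial functions, `ab(gh) = a(g)b(h)` on factorizations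
(well-defined when a domain is a bisection; defined by choice in general). -/
noncomputable def Gpd.convProd {G Y : Type*} [Mul Y] (𝒢 : Gpd G)
    (a b : G → Option Y) : G → Option Y := fun x =>
  if h : ∃ p : Y × Y, ∃ g k : G, a g = some p.1 ∧ b k = some p.2 ∧ 𝒢.mul g k = some x
  then some (h.choose.1 * h.choose.2) else none

/-- The set `[Y^×]a` where the function takes invertible values. -/
def unitsPre {G Y : Type*} [Monoid Y] (a : G → Option Y) : Set G :=
  {g | ∃ y, a g = some y ∧ IsUnit y}

/-- The set `[1]a` where the function takes the value `1`. -/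
def onePre {G Y : Type*} [Monoid Y] (a : G → Option Y) : Set G :=
  {g | a g = some (1 : Y)}

/-- A unital semigroup is `1`-cancellative if `xy = x ↔ y = 1 ↔ yx = x`. -/
def OneCancellative (Y : Type*) [Monoid Y] : Prop :=
  ∀ x y : Y, (x * y = x ↔ y = 1) ∧ (y * x = x ↔ y = 1)

/-- The domination relation `a ≺_s b` relative to a diagonal `D`. -/
def precS {α : Type*} (m : α → α → α) (D : Set α) (a s b : α) : Prop :=
  m (m a s) b = a ∧ m (m b s) a = a ∧ m a s ∈ D ∧ m s a ∈ D

/-- Étale: inversion and multiplication continuous, source a local homeomorphism. -/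
def Gpd.Etale {G : Type*} [TopologicalSpace G] (𝒢 : Gpd G) : Prop :=
  Continuous 𝒢.inv ∧
  Continuous (fun p : {p : G × G // (𝒢.mul p.1 p.2).isSome} =>
    (𝒢.mul p.val.1 p.val.2).get p.property) ∧
  IsLocalHomeomorph 𝒢.src

/-- Ample: étale with a basis of compact open bisections. -/
def Gpd.Ample {G : Type*} [TopologicalSpace G] (𝒢 : Gpd G) : Prop :=
  𝒢.Etale ∧ TopologicalSpace.IsTopologicalBasis
    {O : Set G | IsCompact O ∧ IsOpen O ∧ 𝒢.IsBisection O}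

/-- Bumpy semigroups of `Y`-valued functions on open bisections. -/
structure Gpd.IsBumpy {G Y : Type*} [TopologicalSpace G] [Monoid Y] (𝒢 : Gpd G)
    (S : Set (G → Option Y)) : Prop where
  domBisection : ∀ a ∈ S, 𝒢.IsBisection (pdom a)
  domOpen : ∀ a ∈ S, IsOpen (pdom a)
  mulClosed : ∀ a ∈ S, ∀ b ∈ S, 𝒢.convProd a b ∈ S
  oneProper : ∀ a ∈ S, IsCompact (onePre a)
  empty_mem : (fun _ => (none : Option Y)) ∈ S
  urysohn : ∀ O : Set G, IsOpen O → ∀ g ∈ O, ∃ a ∈ S,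
    pdom a ⊆ O ∧ g ∈ interior (unitsPre a)
  involutive : ∀ a ∈ S, ∀ g ∈ interior (unitsPre a), ∃ b ∈ S,
    𝒢.inv g ∈ interior {h | ∃ y z, a (𝒢.inv h) = some y ∧ b h = some z ∧
      y * z = 1 ∧ z * y = 1}

/-- Compact-bumpy semigroups. -/
structure Gpd.IsCompactBumpy {G Y : Type*} [TopologicalSpace G] [Monoid Y] (𝒢 : Gpd G)
    (S : Set (G → Option Y)) : Prop where
  bumpy : 𝒢.IsBumpy S
  compactUrysohn : ∀ C O : Set G, IsCompact C → 𝒢.IsBisection C → IsOpen O →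
    𝒢.IsBisection O → C ⊆ O → ∃ a ∈ S, pdom a ⊆ O ∧ C ⊆ unitsPre a
  compactInvolutive : ∀ a ∈ S, ∀ C ⊆ unitsPre a, IsCompact C → ∃ b ∈ S,
    ∀ g ∈ C, ∃ y z, a g = some y ∧ b (𝒢.inv g) = some z ∧ y * z = 1 ∧ z * y = 1


namespace Gpd

variable {G : Type*} (𝒢 : Gpd G)

lemma inv_mul_src' (g : G) : 𝒢.mul (𝒢.inv g) g = some (𝒢.src g) := by
  obtain ⟨u, hu⟩ := Option.isSome_iff_exists.mp (𝒢.inv_mul_isSome g)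
  unfold src
  rw [hu]; rfl

lemma mul_inv_rng' (g : G) : 𝒢.mul g (𝒢.inv g) = some (𝒢.rng g) := by
  have h := 𝒢.inv_mul_isSome (𝒢.inv g)
  rw [𝒢.inv_inv] at h
  obtain ⟨u, hu⟩ := Option.isSome_iff_exists.mp h
  unfold rng
  rw [hu]; rfl

lemma mul_src'' (g : G) : 𝒢.mul g (𝒢.src g) = some g :=
  𝒢.mul_src (𝒢.inv_mul_src' g)

lemma rng_mul'' (g : G) : 𝒢.mul (𝒢.rng g) g = some g :=
  𝒢.rng_mul (𝒢.mul_inv_rng' g)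

lemma unit_facts {u : G} (hu : u ∈ 𝒢.unitSpace) :
    𝒢.mul u u = some u ∧ 𝒢.inv u = u := by
  obtain ⟨g, rfl⟩ := hu
  have h1 : 𝒢.mul (𝒢.inv g) g = some (𝒢.src g) := 𝒢.inv_mul_src' g
  have h2 : 𝒢.mul g (𝒢.src g) = some g := 𝒢.mul_src'' g
  have hmul : 𝒢.mul (𝒢.src g) (𝒢.src g) = some (𝒢.src g) := by
    have := 𝒢.massoc h1 h2
    rw [this, h1]
  have h3 : 𝒢.mul g (𝒢.inv (𝒢.src g)) = some g := 𝒢.mul_inv_cancel h2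
  have h4 : 𝒢.mul (𝒢.inv g) g = some (𝒢.inv (𝒢.src g)) := 𝒢.inv_mul_cancel h3
  rw [h1] at h4
  exact ⟨hmul, (Option.some_injective _ h4).symm⟩

lemma src_mem_unit (g : G) : 𝒢.src g ∈ 𝒢.unitSpace := ⟨g, rfl⟩

lemma rng_mem_unit (g : G) : 𝒢.rng g ∈ 𝒢.unitSpace := by
  refine ⟨𝒢.inv g, ?_⟩
  unfold src rng
  rw [𝒢.inv_inv]
  have h := 𝒢.inv_mul_isSome (𝒢.inv g)
  rw [𝒢.inv_inv] at h
  obtain ⟨u, hu⟩ := Option.isSome_iff_exists.mp h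
  rw [hu]; rfl

lemma src_unit {u : G} (hu : u ∈ 𝒢.unitSpace) : 𝒢.src u = u := by
  unfold src
  rw [(𝒢.unit_facts hu).2, (𝒢.unit_facts hu).1]; rfl

lemma rng_unit {u : G} (hu : u ∈ 𝒢.unitSpace) : 𝒢.rng u = u := by
  unfold rng
  rw [(𝒢.unit_facts hu).2, (𝒢.unit_facts hu).1]; rfl

lemma mul_unit_right {g k x : G} (hk : k ∈ 𝒢.unitSpace)
    (h : 𝒢.mul g k = some x) : k = 𝒢.src g ∧ x = g := by
  have hd : (𝒢.mul g k).isSome := by rw [h]; rfl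
  have h2 := (𝒢.defined_iff g k).mp hd
  rw [(𝒢.unit_facts hk).2, (𝒢.unit_facts hk).1, 𝒢.inv_mul_src' g] at h2
  have hks : k = 𝒢.src g := (Option.some_injective _ h2).symm
  subst hks
  have := 𝒢.mul_src'' g
  rw [h] at this
  exact ⟨rfl, Option.some_injective _ this⟩

lemma mul_unit_left {g k x : G} (hk : k ∈ 𝒢.unitSpace)
    (h : 𝒢.mul k g = some x) : k = 𝒢.rng g ∧ x = g := by
  have hd : (𝒢.mul k g).isSome := by rw [h]; rfl
  have h2 := (𝒢.defined_iff k g).mp hd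
  rw [(𝒢.unit_facts hk).2, (𝒢.unit_facts hk).1, 𝒢.mul_inv_rng' g] at h2
  have hks : k = 𝒢.rng g := Option.some_injective _ h2
  subst hks
  have := 𝒢.rng_mul'' g
  rw [h] at this
  exact ⟨rfl, Option.some_injective _ this⟩

lemma bisection_of_units {B : Set G} (hB : B ⊆ 𝒢.unitSpace) :
    𝒢.IsBisection B := by
  intro g hg h hh hor
  rcases hor with he | he
  · rw [← 𝒢.src_unit (hB hg), ← 𝒢.src_unit (hB hh), he]
  · rw [← 𝒢.rng_unit (hB hg), ← 𝒢.rng_unit (hB hh), he]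

lemma convProd_unit_right {Y : Type*} [Mul Y] {a z : G → Option Y}
    (hz : pdom z ⊆ 𝒢.unitSpace) (x : G) :
    𝒢.convProd a z x = (a x).bind fun y => (z (𝒢.src x)).map fun w => y * w := by
  unfold convProd
  split_ifs with h
  · obtain ⟨g, k, h1, h2, h3⟩ := h.choose_spec
    have hk : k ∈ pdom z := by simp only [pdom, Set.mem_setOf_eq, h2]; rfl
    obtain ⟨hks, rfl⟩ := 𝒢.mul_unit_right (hz hk) h3
    rw [h1, ← hks, h2]; rfl
  · cases hax : a x with
    | none => rfl
    | some y =>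
      cases hzx : z (𝒢.src x) with
      | none => rfl
      | some w =>
        exact absurd ⟨(y, w), x, 𝒢.src x, hax, hzx, 𝒢.mul_src'' x⟩ h

lemma convProd_unit_left {Y : Type*} [Mul Y] {a z : G → Option Y}
    (hz : pdom z ⊆ 𝒢.unitSpace) (x : G) :
    𝒢.convProd z a x = (z (𝒢.rng x)).bind fun w => (a x).map fun y => w * y := by
  unfold convProd
  split_ifs with h
  · obtain ⟨g, k, h1, h2, h3⟩ := h.choose_spec
    have hg : g ∈ pdom z := by simp only [pdom, Set.mem_setOf_eq, h1]; rfl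
    obtain ⟨hgr, rfl⟩ := 𝒢.mul_unit_left (hz hg) h3
    rw [h2, ← hgr, h1]; rfl
  · cases hax : a x with
    | none => cases z (𝒢.rng x) <;> rfl
    | some y =>
      cases hzx : z (𝒢.rng x) with
      | none => rfl
      | some w =>
        exact absurd ⟨(w, y), 𝒢.rng x, x, hzx, hax, 𝒢.rng_mul'' x⟩ h

end Gpd

/-- if `dom[Z]` is `T₀` on `G⁰` then `C` is the commutant of `Z`. -/
theorem stmt10 {G Y : Type*} [Semigroup Y] (𝒢 : Gpd G)
    (A : Set (G → Option Y))
    (m : (G → Option Y) → (G → Option Y) → (G → Option Y))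
    (hclosed : ∀ a ∈ A, ∀ b ∈ A, m a b ∈ A)
    (hassoc : ∀ a ∈ A, ∀ b ∈ A, ∀ c ∈ A, m (m a b) c = m a (m b c))
    (hagree : ∀ a b : G → Option Y,
      (𝒢.IsBisection (pdom a) ∨ 𝒢.IsBisection (pdom b)) → m a b = 𝒢.convProd a b)
    (Z C : Set (G → Option Y))
    (hZdef : Z = {a ∈ A | pdom a ⊆ 𝒢.unitSpace ∧ ∀ g y, a g = some y → y ∈ Set.center Y})
    (hCdef : C = {a ∈ A | pdom a ⊆ 𝒢.iso})
    (hT0 : ∀ x ∈ 𝒢.unitSpace, ∀ y ∈ 𝒢.unitSpace, x ≠ y →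
      ∃ z ∈ Z, Xor' (x ∈ pdom z) (y ∈ pdom z)) :
    C = {a ∈ A | ∀ z ∈ Z, m a z = m z a} := by
  subst hZdef hCdef
  ext a
  simp only [Set.mem_setOf_eq]
  constructor
  · rintro ⟨haA, haiso⟩
    refine ⟨haA, ?_⟩
    rintro z ⟨hzA, hzdom, hzc⟩
    have hbis : 𝒢.IsBisection (pdom z) := 𝒢.bisection_of_units hzdom
    rw [hagree a z (Or.inr hbis), hagree z a (Or.inl hbis)]
    funext x
    rw [𝒢.convProd_unit_right hzdom, 𝒢.convProd_unit_left hzdom]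
    cases hax : a x with
    | none => simp
    | some y =>
      have hx : x ∈ pdom a := by simp only [pdom, Set.mem_setOf_eq, hax]; rfl
      have hiso : 𝒢.src x = 𝒢.rng x := haiso hx
      rw [← hiso]
      cases hzx : z (𝒢.src x) with
      | none => rfl
      | some w =>
        have hc := (hzc _ _ hzx).comm y
        simp [hc.eq]
  · rintro ⟨haA, hcomm⟩
    refine ⟨haA, ?_⟩
    intro g hg
    by_contra hne
    obtain ⟨z, hzZ, hxor⟩ :=
      hT0 (𝒢.src g) (𝒢.src_mem_unit g) (𝒢.rng g) (𝒢.rng_mem_unit g) hne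
    obtain ⟨hzA, hzdom, hzc⟩ := hzZ
    have hbis : 𝒢.IsBisection (pdom z) := 𝒢.bisection_of_units hzdom
    have heq := hcomm z ⟨hzA, hzdom, hzc⟩
    rw [hagree a z (Or.inr hbis), hagree z a (Or.inl hbis)] at heq
    have hval := congrFun heq g
    rw [𝒢.convProd_unit_right hzdom, 𝒢.convProd_unit_left hzdom] at hval
    obtain ⟨y, hay⟩ := Option.isSome_iff_exists.mp hg
    rw [hay] at hval
    rcases hxor with ⟨h1, h2⟩ | ⟨h1, h2⟩
    · obtain ⟨w, hw⟩ := Option.isSome_iff_exists.mp h1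
      have h2' : z (𝒢.rng g) = none := Option.not_isSome_iff_eq_none.mp h2
      rw [hw, h2'] at hval
      simp at hval
    · obtain ⟨w, hw⟩ := Option.isSome_iff_exists.mp h1
      have h2' : z (𝒢.src g) = none := Option.not_isSome_iff_eq_none.mp h2
      rw [hw, h2'] at hval
      simp at hval
end

section
/- Let G be a groupoid, A a semigroup of Y-valued partial functions, Z the central diagonal (elements with domain in G⁰ and central values), and suppose dom[Z] is T₀. Then every normaliser of Z has isosection domain: if n ∈ A satisfies nZ = Zn, then dom(n) is an isosection, i.e. dom(n)·dom(n)⁻¹ ∪ dom(n)⁻¹·dom(n) ⊆ G^iso. -/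
namespace GpdAux

open Gpd

variable {G : Type*} (𝒢 : Gpd G)

lemma src_spec (g : G) : 𝒢.mul (𝒢.inv g) g = some (𝒢.src g) := by
  have h := 𝒢.inv_mul_isSome g
  unfold Gpd.src
  cases hc : 𝒢.mul (𝒢.inv g) g with
  | none => rw [hc] at h; simp at h
  | some u => simp [hc]

lemma rng_spec (g : G) : 𝒢.mul g (𝒢.inv g) = some (𝒢.rng g) := by
  have h := 𝒢.inv_mul_isSome (𝒢.inv g)
  rw [𝒢.inv_inv] at h
  unfold Gpd.rng
  cases hc : 𝒢.mul g (𝒢.inv g) with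
  | none => rw [hc] at h; simp at h
  | some u => simp [hc]

lemma mul_src_self (g : G) : 𝒢.mul g (𝒢.src g) = some g :=
  𝒢.mul_src (src_spec 𝒢 g)

lemma rng_mul_self (g : G) : 𝒢.mul (𝒢.rng g) g = some g :=
  𝒢.rng_mul (rng_spec 𝒢 g)

lemma inv_unit {u : G} (hu : u ∈ 𝒢.unitSpace) : 𝒢.inv u = u := by
  obtain ⟨g, hg⟩ := hu
  have hu' : 𝒢.mul (𝒢.inv g) g = some u := by rw [src_spec]; exact congrArg some hg
  have h1 : 𝒢.mul g u = some g := 𝒢.mul_src hu'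
  have h2 : 𝒢.mul g (𝒢.inv u) = some g := 𝒢.mul_inv_cancel h1
  have h3 : 𝒢.mul (𝒢.inv g) g = some (𝒢.inv u) := 𝒢.inv_mul_cancel h2
  rw [hu'] at h3
  exact (Option.some_injective _ h3).symm

lemma mul_unit_self {u : G} (hu : u ∈ 𝒢.unitSpace) : 𝒢.mul u u = some u := by
  obtain ⟨g, hg⟩ := hu
  have hu' : 𝒢.mul (𝒢.inv g) g = some u := by rw [src_spec]; exact congrArg some hg
  have h1 : 𝒢.mul g u = some g := 𝒢.mul_src hu'
  have := 𝒢.massoc hu' h1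
  rw [hu'] at this
  exact this

lemma src_unit {u : G} (hu : u ∈ 𝒢.unitSpace) : 𝒢.src u = u := by
  have h := src_spec 𝒢 u
  rw [inv_unit 𝒢 hu, mul_unit_self 𝒢 hu] at h
  exact (Option.some_injective _ h).symm

lemma rng_unit {u : G} (hu : u ∈ 𝒢.unitSpace) : 𝒢.rng u = u := by
  have h := rng_spec 𝒢 u
  rw [inv_unit 𝒢 hu, mul_unit_self 𝒢 hu] at h
  exact (Option.some_injective _ h).symm

lemma src_mem (g : G) : 𝒢.src g ∈ 𝒢.unitSpace := ⟨g, rfl⟩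

lemma rng_mem (g : G) : 𝒢.rng g ∈ 𝒢.unitSpace := by
  refine ⟨𝒢.inv g, ?_⟩
  have h1 := src_spec 𝒢 (𝒢.inv g)
  rw [𝒢.inv_inv, rng_spec] at h1
  exact (Option.some_injective _ h1).symm

lemma unit_mul_left {u k x : G} (hu : u ∈ 𝒢.unitSpace)
    (h : 𝒢.mul u k = some x) : u = 𝒢.rng k ∧ x = k := by
  have hs : (𝒢.mul u k).isSome := by rw [h]; rfl
  have hd := (𝒢.defined_iff u k).mp hs
  rw [inv_unit 𝒢 hu, mul_unit_self 𝒢 hu, rng_spec] at hd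
  have huk : u = 𝒢.rng k := Option.some_injective _ hd
  refine ⟨huk, ?_⟩
  rw [huk, rng_mul_self] at h
  exact (Option.some_injective _ h).symm

lemma unit_mul_right {u k x : G} (hu : u ∈ 𝒢.unitSpace)
    (h : 𝒢.mul k u = some x) : u = 𝒢.src k ∧ x = k := by
  have hs : (𝒢.mul k u).isSome := by rw [h]; rfl
  have hd := (𝒢.defined_iff k u).mp hs
  rw [inv_unit 𝒢 hu, mul_unit_self 𝒢 hu, src_spec] at hd
  have huk : u = 𝒢.src k := (Option.some_injective _ hd).symm
  refine ⟨huk, ?_⟩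
  rw [huk, mul_src_self] at h
  exact (Option.some_injective _ h).symm

lemma unit_bisection {B : Set G} (hB : B ⊆ 𝒢.unitSpace) : 𝒢.IsBisection B := by
  intro g hg h hh hor
  have hg' := hB hg
  have hh' := hB hh
  rcases hor with h1 | h1
  · rwa [src_unit 𝒢 hg', src_unit 𝒢 hh'] at h1
  · rwa [rng_unit 𝒢 hg', rng_unit 𝒢 hh'] at h1

lemma convProd_isSome_iff {Y : Type*} [Mul Y] (a b : G → Option Y) (x : G) :
    (𝒢.convProd a b x).isSome ↔
      ∃ p : Y × Y, ∃ g k : G, a g = some p.1 ∧ b k = some p.2 ∧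
        𝒢.mul g k = some x := by
  constructor
  · intro hs
    by_contra hc
    unfold Gpd.convProd at hs
    rw [dif_neg hc] at hs
    simp at hs
  · intro hc
    unfold Gpd.convProd
    rw [dif_pos hc]
    rfl

/-- Lemma A: `z (rng g)` and `n g` defined implies `g ∈ dom (z ⋆ n)`. -/
lemma memA {Y : Type*} [Mul Y] {z n : G → Option Y} {g : G}
    (hz : (z (𝒢.rng g)).isSome) (hg : g ∈ pdom n) :
    g ∈ pdom (𝒢.convProd z n) := by
  obtain ⟨y, hy⟩ := Option.isSome_iff_exists.mp hz
  obtain ⟨w, hw⟩ := Option.isSome_iff_exists.mp hg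
  exact (convProd_isSome_iff 𝒢 z n g).mpr
    ⟨(y, w), 𝒢.rng g, g, hy, hw, rng_mul_self 𝒢 g⟩

/-- Lemma D: `z (src g)` and `n g` defined implies `g ∈ dom (n ⋆ z)`. -/
lemma memD {Y : Type*} [Mul Y] {z n : G → Option Y} {g : G}
    (hz : (z (𝒢.src g)).isSome) (hg : g ∈ pdom n) :
    g ∈ pdom (𝒢.convProd n z) := by
  obtain ⟨y, hy⟩ := Option.isSome_iff_exists.mp hz
  obtain ⟨w, hw⟩ := Option.isSome_iff_exists.mp hg
  exact (convProd_isSome_iff 𝒢 n z g).mpr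
    ⟨(w, y), g, 𝒢.src g, hw, hy, mul_src_self 𝒢 g⟩

/-- Lemma C: if `dom z ⊆ G⁰` and `g ∈ dom (z ⋆ n)` then `rng g ∈ dom z`. -/
lemma memC {Y : Type*} [Mul Y] {z n : G → Option Y} (hz : pdom z ⊆ 𝒢.unitSpace)
    {g : G} (hg : g ∈ pdom (𝒢.convProd z n)) : (z (𝒢.rng g)).isSome := by
  obtain ⟨p, g', k, h1, h2, h3⟩ := (convProd_isSome_iff 𝒢 z n g).mp hg
  have hg' : g' ∈ 𝒢.unitSpace := hz (by rw [pdom, Set.mem_setOf_eq, h1]; rfl)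
  obtain ⟨he, hk⟩ := unit_mul_left 𝒢 hg' h3
  rw [hk, ← he, h1]; rfl

/-- Lemma B: if `dom z ⊆ G⁰` and `g ∈ dom (n ⋆ z)` then `src g ∈ dom z`. -/
lemma memB {Y : Type*} [Mul Y] {z n : G → Option Y} (hz : pdom z ⊆ 𝒢.unitSpace)
    {g : G} (hg : g ∈ pdom (𝒢.convProd n z)) : (z (𝒢.src g)).isSome := by
  obtain ⟨p, g', k, h1, h2, h3⟩ := (convProd_isSome_iff 𝒢 n z g).mp hg
  have hk' : k ∈ 𝒢.unitSpace := hz (by rw [pdom, Set.mem_setOf_eq, h2]; rfl)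
  obtain ⟨he, hk⟩ := unit_mul_right 𝒢 hk' h3
  rw [hk, ← he, h2]; rfl

end GpdAux

/-- if `dom[Z]` is `T₀` then every normaliser of `Z` has
isosection domain. -/
theorem stmt11 {G Y : Type*} [Semigroup Y] (𝒢 : Gpd G)
    (A : Set (G → Option Y))
    (m : (G → Option Y) → (G → Option Y) → (G → Option Y))
    (hclosed : ∀ a ∈ A, ∀ b ∈ A, m a b ∈ A)
    (hassoc : ∀ a ∈ A, ∀ b ∈ A, ∀ c ∈ A, m (m a b) c = m a (m b c))
    (hagree : ∀ a b : G → Option Y,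
      (𝒢.IsBisection (pdom a) ∨ 𝒢.IsBisection (pdom b)) → m a b = 𝒢.convProd a b)
    (Z : Set (G → Option Y))
    (hZdef : Z = {a ∈ A | pdom a ⊆ 𝒢.unitSpace ∧ ∀ g y, a g = some y → y ∈ Set.center Y})
    (hT0 : ∀ x ∈ 𝒢.unitSpace, ∀ y ∈ 𝒢.unitSpace, x ≠ y →
      ∃ z ∈ Z, Xor' (x ∈ pdom z) (y ∈ pdom z))
    (n : G → Option Y) (hn : n ∈ A)
    (hnorm : {x | ∃ z ∈ Z, x = m n z} = {x | ∃ z ∈ Z, x = m z n}) :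
    𝒢.IsIsosection (pdom n) := by
  open GpdAux in
  -- facts about elements of Z
  have hZdom : ∀ z ∈ Z, pdom z ⊆ 𝒢.unitSpace := by
    intro z hz
    rw [hZdef] at hz
    exact hz.2.1
  have hZbis : ∀ z ∈ Z, 𝒢.IsBisection (pdom z) := fun z hz =>
    unit_bisection 𝒢 (hZdom z hz)
  -- main claim 1: src g = src h and rng g ∈ dom z (z ∈ Z) implies rng h ∈ dom z
  have main1 : ∀ z ∈ Z, ∀ g h : G, g ∈ pdom n → h ∈ pdom n →
      𝒢.src g = 𝒢.src h → (z (𝒢.rng g)).isSome → (z (𝒢.rng h)).isSome := by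
    intro z hz g h hg hh hs hzg
    have hmem : m z n ∈ {x | ∃ z ∈ Z, x = m z n} := ⟨z, hz, rfl⟩
    rw [← hnorm] at hmem
    obtain ⟨z', hz', heq⟩ := hmem
    have e1 : m z n = 𝒢.convProd z n := hagree z n (Or.inl (hZbis z hz))
    have e2 : m n z' = 𝒢.convProd n z' := hagree n z' (Or.inr (hZbis z' hz'))
    have hgA : g ∈ pdom (𝒢.convProd z n) := memA 𝒢 hzg hg
    have hgB : g ∈ pdom (𝒢.convProd n z') := by
      rw [← e2, ← heq, e1]; exact hgA
    have hsrc : (z' (𝒢.src g)).isSome := memB 𝒢 (hZdom z' hz') hgB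
    rw [hs] at hsrc
    have hhD : h ∈ pdom (𝒢.convProd n z') := memD 𝒢 hsrc hh
    have hhC : h ∈ pdom (𝒢.convProd z n) := by
      rw [← e1, heq, e2]; exact hhD
    exact memC 𝒢 (hZdom z hz) hhC
  -- main claim 2: rng g = rng h and src g ∈ dom z (z ∈ Z) implies src h ∈ dom z
  have main2 : ∀ z ∈ Z, ∀ g h : G, g ∈ pdom n → h ∈ pdom n →
      𝒢.rng g = 𝒢.rng h → (z (𝒢.src g)).isSome → (z (𝒢.src h)).isSome := by
    intro z hz g h hg hh hr hzg
    have hmem : m n z ∈ {x | ∃ z ∈ Z, x = m n z} := ⟨z, hz, rfl⟩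
    rw [hnorm] at hmem
    obtain ⟨z', hz', heq⟩ := hmem
    have e1 : m n z = 𝒢.convProd n z := hagree n z (Or.inr (hZbis z hz))
    have e2 : m z' n = 𝒢.convProd z' n := hagree z' n (Or.inl (hZbis z' hz'))
    have hgD : g ∈ pdom (𝒢.convProd n z) := memD 𝒢 hzg hg
    have hgC : g ∈ pdom (𝒢.convProd z' n) := by
      rw [← e2, ← heq, e1]; exact hgD
    have hrng : (z' (𝒢.rng g)).isSome := memC 𝒢 (hZdom z' hz') hgC
    rw [hr] at hrng
    have hhA : h ∈ pdom (𝒢.convProd z' n) := memA 𝒢 hrng hh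
    have hhB : h ∈ pdom (𝒢.convProd n z) := by
      rw [← e1, heq, e2]; exact hhA
    exact memB 𝒢 (hZdom z hz) hhB
  intro g hg h hh
  constructor
  · intro hs
    by_contra hr
    obtain ⟨z, hz, hxor⟩ := hT0 (𝒢.rng g) (rng_mem 𝒢 g) (𝒢.rng h) (rng_mem 𝒢 h) hr
    rcases hxor with ⟨hin, hnot⟩ | ⟨hin, hnot⟩
    · exact hnot (main1 z hz g h hg hh hs hin)
    · exact hnot (main1 z hz h g hh hg hs.symm hin)
  · intro hr
    by_contra hs
    obtain ⟨z, hz, hxor⟩ := hT0 (𝒢.src g) (src_mem 𝒢 g) (𝒢.src h) (src_mem 𝒢 h) hs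
    rcases hxor with ⟨hin, hnot⟩ | ⟨hin, hnot⟩
    · exact hnot (main2 z hz g h hg hh hr hin)
    · exact hnot (main2 z hz h g hh hg hr.symm hin)
end
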